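/- There exist a real number c and a point p ∈ ℝ² with both coordinates positive such that the polynomial f(x,y) = 1 + c·x·y + x²·y + x·y² ∈ ℝ[x,y] (whose Newton polygon is the triangle with vertices (0,0), (2,1), (1,2) and whose coefficients at the three vertices equal 1) satisfies: the set {(x,y) ∈ ℝ² : x > 0, y > 0, f(x,y) = 0} equals the singleton {p}, both partial derivatives of f vanish at p, and the determinant of the 2×2 Hessian matrix of f at p is positive (i.e., the intersection of the real cubic curve {f = 0} with the positive quadrant is a single solitary node). -/

import Mathlib

/-!
Take `c = -3` and `p = (1, 1)`. With `s = x + y`, `P = x y`, the equation `f = 0` reads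
`P (3 - s) = 1`; since `4 P ≤ s²` this forces `(s - 2)² (s + 1) ≤ 0`, hence `s = 2`, `P = 1`
and `x = y = 1` (this is AM–GM for `x²y`, `xy²`, `1`). At `(1, 1)` the gradient vanishes and
the Hessian is `!![2, 1; 1, 2]`, of determinant `3`.
-/

open MvPolynomial

/-- The cubic `f(x,y) = 1 + c·x·y + x²·y + x·y²`, whose Newton polygon is the triangle
with vertices `(0,0)`, `(2,1)`, `(1,2)` and whose coefficients at the three vertices
equal `1`. -/
noncomputable def cubicF (c : ℝ) : MvPolynomial (Fin 2) ℝ :=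
  1 + C c * (X 0 * X 1) + X 0 ^ 2 * X 1 + X 0 * X 1 ^ 2

lemma eval_cubicF (c : ℝ) (q : Fin 2 → ℝ) :
    eval q (cubicF c) = 1 + c * (q 0 * q 1) + q 0 ^ 2 * q 1 + q 0 * q 1 ^ 2 := by
  simp [cubicF]

lemma pderiv_zero_cubicF (c : ℝ) :
    pderiv 0 (cubicF c) = C c * X 1 + C 2 * X 0 * X 1 + X 1 ^ 2 := by
  simp [cubicF, map_ofNat C 2]
  ring

lemma pderiv_one_cubicF (c : ℝ) :
    pderiv 1 (cubicF c) = C c * X 0 + X 0 ^ 2 + C 2 * X 0 * X 1 := by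
  simp [cubicF, map_ofNat C 2]
  ring

lemma hessian_cubicF (c : ℝ) (q : Fin 2 → ℝ) :
    !![eval q (pderiv 0 (pderiv 0 (cubicF c))), eval q (pderiv 0 (pderiv 1 (cubicF c)));
       eval q (pderiv 1 (pderiv 0 (cubicF c))), eval q (pderiv 1 (pderiv 1 (cubicF c)))] =
      !![2 * q 1, c + 2 * q 0 + 2 * q 1; c + 2 * q 0 + 2 * q 1, 2 * q 0] := by
  simp [pderiv_zero_cubicF, pderiv_one_cubicF]
  ring_nf

lemma eq_one_of_cubic_eq_zero {x y : ℝ} (hx : 0 < x) (hy : 0 < y)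
    (h : 1 + -3 * (x * y) + x ^ 2 * y + x * y ^ 2 = 0) : x = 1 ∧ y = 1 := by
  have hxy : 0 < x * y := mul_pos hx hy
  have hprod : x * y * (3 - (x + y)) = 1 := by linear_combination -h
  have hsum : x + y = 2 := by
    have hs : x + y < 3 := by nlinarith
    have : (x + y - 2) ^ 2 * (x + y + 1) ≤ 0 := by
      nlinarith [mul_nonneg (sq_nonneg (x - y)) (by linarith : (0:ℝ) ≤ 3 - (x + y))]
    nlinarith [sq_nonneg (x + y - 2)]
  have hdiff : x = y := by nlinarith [sq_nonneg (x - y)]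
  constructor <;> linarith

theorem stmt_8 :
    ∃ (c : ℝ) (p : Fin 2 → ℝ), 0 < p 0 ∧ 0 < p 1 ∧
      {q : Fin 2 → ℝ | 0 < q 0 ∧ 0 < q 1 ∧ MvPolynomial.eval q (cubicF c) = 0} = {p} ∧
      MvPolynomial.eval p (pderiv 0 (cubicF c)) = 0 ∧
      MvPolynomial.eval p (pderiv 1 (cubicF c)) = 0 ∧
      0 < Matrix.det
        !![MvPolynomial.eval p (pderiv 0 (pderiv 0 (cubicF c))),
           MvPolynomial.eval p (pderiv 0 (pderiv 1 (cubicF c)));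
           MvPolynomial.eval p (pderiv 1 (pderiv 0 (cubicF c))),
           MvPolynomial.eval p (pderiv 1 (pderiv 1 (cubicF c)))] := by
  refine ⟨-3, ![1, 1], one_pos, one_pos, ?_, ?_, ?_, ?_⟩
  · ext q
    simp only [Set.mem_ofPred_eq, Set.mem_singleton_iff, eval_cubicF]
    constructor
    · rintro ⟨hx, hy, h⟩
      obtain ⟨h0, h1⟩ := eq_one_of_cubic_eq_zero hx hy h
      ext i
      fin_cases i <;> simp [h0, h1]
    · rintro rfl
      norm_num
  · rw [pderiv_zero_cubicF]
    norm_num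
  · rw [pderiv_one_cubicF]
    norm_num
  · rw [hessian_cubicF, Matrix.det_fin_two_of]
    norm_num
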